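/- For each integer i, we have x_{i+1} t_{n-1,i+1} + u_{i-1} t_{n-1,i-1} = (x_i + u_i) t_{n-1,i}. -/

import Mathlib

/- Setting: a semifield `K` (commutative associative addition `add`, multiplicative
abelian group, distributivity), with `u, x : ℤ → K` being `n`-periodic families. -/

variable {K : Type*} [CommGroup K]

/-- The nonempty sum `f 0 + f 1 + ⋯ + f r` with respect to the binary operation `add`. -/
def addSum (add : K → K → K) (f : ℕ → K) : ℕ → K
  | 0 => f 0
  | r + 1 => add (addSum add f r) (f (r + 1))

/-- The element `t_{r,j} = Σ_{k=0}^{r} (∏_{i=1}^{k} x_{j+i}) · (∏_{i=k+1}^{r} u_{j+i})`. -/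
def tpoly (add : K → K → K) (u x : ℤ → K) (r : ℕ) (j : ℤ) : K :=
  addSum add
    (fun k => (∏ i ∈ Finset.Icc 1 k, x (j + i)) * ∏ i ∈ Finset.Icc (k + 1) r, u (j + i)) r

/-!
Peeling off the last summand of `t_{r+1,j}` gives
`t_{r+1,j} = u_{j+r+1} t_{r,j} + ∏_{k=1}^{r+1} x_{j+k}`; peeling off the first gives
`t_{r+1,j} = ∏_{k=1}^{r+1} u_{j+k} + x_{j+1} t_{r,j+1}`. For `n ≥ 2` expand each of the four
products in the identity at level `n - 2` by whichever rule makes periodicity apply: both sides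
become the sum of the same four terms, namely the full-period products `∏ x`, `∏ u` and
`u_i x_{i+1} t_{n-2,i+1}`, `u_{i-1} x_i t_{n-2,i}`. No additive cancellation is used, so this
works in any semifield.
-/

open Finset

section addSum

variable {M : Type*} (add : M → M → M)

theorem addSum_congr {f g : ℕ → M} {r : ℕ} (h : ∀ k ≤ r, f k = g k) :
    addSum add f r = addSum add g r := by
  induction r with
  | zero => exact h 0 le_rfl
  | succ r ih => rw [addSum, addSum, ih fun k hk => h k (hk.trans r.le_succ), h (r + 1) le_rfl]

theorem mul_addSum [Mul M] (hdistrib : ∀ a b c : M, a * add b c = add (a * b) (a * c))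
    (c : M) (f : ℕ → M) (r : ℕ) :
    c * addSum add f r = addSum add (fun k => c * f k) r := by
  induction r with
  | zero => rfl
  | succ r ih => rw [addSum, addSum, hdistrib, ih]

theorem addSum_succ' (hadd_assoc : ∀ a b c : M, add (add a b) c = add a (add b c))
    (f : ℕ → M) (r : ℕ) :
    addSum add f (r + 1) = add (f 0) (addSum add (fun k => f (k + 1)) r) := by
  induction r with
  | zero => rfl
  | succ r ih => rw [addSum, ih, hadd_assoc, addSum]

end addSum

section prod

variable {M : Type*} [CommMonoid M]

theorem prod_Icc_add_one_add_one (f : ℤ → M) (j : ℤ) (a b : ℕ) :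
    ∏ i ∈ Icc (a + 1) (b + 1), f (j + i) = ∏ i ∈ Icc a b, f (j + 1 + i) := by
  rw [← map_add_right_Icc, prod_map]
  simp [add_comm, add_left_comm]

theorem prod_Icc_one_succ (f : ℤ → M) (j : ℤ) (k : ℕ) :
    ∏ i ∈ Icc 1 (k + 1), f (j + i) = f (j + 1) * ∏ i ∈ Icc 1 k, f (j + 1 + i) := by
  rw [← insert_Icc_add_one_left_eq_Icc (by omega), prod_insert (by simp),
    prod_Icc_add_one_add_one, Nat.cast_one]

theorem Function.Periodic.mul_prod_Icc_one {f : ℤ → M} {r : ℕ} (hf : f.Periodic (r + 1 : ℕ))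
    (j : ℤ) :
    f (j + 1) * ∏ i ∈ Icc 1 r, f (j + 1 + i) = f j * ∏ i ∈ Icc 1 r, f (j + i) := by
  rw [← prod_Icc_one_succ, prod_Icc_succ_top (by omega), hf, mul_comm]

end prod

section tpoly

variable (add : K → K → K) (u x : ℤ → K)

theorem tpoly_zero (j : ℤ) : tpoly add u x 0 j = 1 := by
  simp [tpoly, addSum]

theorem tpoly_succ (hdistrib : ∀ a b c : K, a * add b c = add (a * b) (a * c))
    (r : ℕ) (j : ℤ) :
    tpoly add u x (r + 1) j =
      add (u (j + (r + 1 : ℕ)) * tpoly add u x r j) (∏ i ∈ Icc 1 (r + 1), x (j + i)) := by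
  rw [tpoly, addSum, tpoly, mul_addSum add hdistrib]
  congr 1
  · refine addSum_congr add fun k hk => ?_
    rw [prod_Icc_succ_top (by omega)]
    ac_rfl
  · simp

theorem tpoly_succ' (hadd_assoc : ∀ a b c : K, add (add a b) c = add a (add b c))
    (hdistrib : ∀ a b c : K, a * add b c = add (a * b) (a * c)) (r : ℕ) (j : ℤ) :
    tpoly add u x (r + 1) j =
      add (∏ i ∈ Icc 1 (r + 1), u (j + i)) (x (j + 1) * tpoly add u x r (j + 1)) := by
  rw [tpoly, addSum_succ' add hadd_assoc, tpoly, mul_addSum add hdistrib]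
  congr 1
  · simp
  · refine addSum_congr add fun k _ => ?_
    rw [prod_Icc_one_succ, prod_Icc_add_one_add_one, mul_assoc]

end tpoly

/-- Lemma (f): `x_{i+1} t_{n-1,i+1} + u_{i-1} t_{n-1,i-1} = (x_i + u_i) t_{n-1,i}`. -/
theorem tpoly_threeterm (n : ℕ) (hn : 0 < n) (add : K → K → K)
    (hadd_assoc : ∀ a b c : K, add (add a b) c = add a (add b c))
    (hadd_comm : ∀ a b : K, add a b = add b a)
    (hdistrib : ∀ a b c : K, a * add b c = add (a * b) (a * c))
    (u x : ℤ → K) (hu : ∀ i : ℤ, u (i + n) = u i) (hx : ∀ i : ℤ, x (i + n) = x i)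
    (i : ℤ) :
    add (x (i + 1) * tpoly add u x (n - 1) (i + 1)) (u (i - 1) * tpoly add u x (n - 1) (i - 1)) =
      add (x i) (u i) * tpoly add u x (n - 1) i := by
  obtain rfl | ⟨r, rfl⟩ : n = 1 ∨ ∃ r, n = r + 1 + 1 := by
    rcases n with _ | _ | r <;> simp_all
  · simp only [Nat.sub_self, tpoly_zero, mul_one, sub_add_cancel, ← hu (i - 1), ← hx i,
      Nat.cast_one]
  rw [Nat.add_sub_cancel]
  have hu₁ : u (i + (r + 1 : ℕ)) = u (i - 1) := by rw [← hu (i - 1)]; push_cast; ring_nf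
  have hu₂ : u (i + 1 + (r + 1 : ℕ)) = u i := by rw [← hu i]; push_cast; ring_nf
  have h₁ : x (i + 1) * tpoly add u x (r + 1) (i + 1) =
      add (u i * (x (i + 1) * tpoly add u x r (i + 1)))
        (x i * ∏ k ∈ Icc 1 (r + 1), x (i + k)) := by
    rw [tpoly_succ add u x hdistrib, hdistrib, hu₂, mul_left_comm,
      Function.Periodic.mul_prod_Icc_one hx]
  have h₂ : u (i - 1) * tpoly add u x (r + 1) (i - 1) =
      add (u i * ∏ k ∈ Icc 1 (r + 1), u (i + k)) (u (i - 1) * (x i * tpoly add u x r i)) := by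
    rw [tpoly_succ' add u x hadd_assoc hdistrib, hdistrib,
      ← Function.Periodic.mul_prod_Icc_one hu (i - 1), sub_add_cancel]
  have h₃ : x i * tpoly add u x (r + 1) i =
      add (u (i - 1) * (x i * tpoly add u x r i)) (x i * ∏ k ∈ Icc 1 (r + 1), x (i + k)) := by
    rw [tpoly_succ add u x hdistrib, hdistrib, hu₁, mul_left_comm]
  have h₄ : u i * tpoly add u x (r + 1) i =
      add (u i * ∏ k ∈ Icc 1 (r + 1), u (i + k))
        (u i * (x (i + 1) * tpoly add u x r (i + 1))) := by
    rw [tpoly_succ' add u x hadd_assoc hdistrib, hdistrib]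
  have : Std.Associative add := ⟨hadd_assoc⟩
  have : Std.Commutative add := ⟨hadd_comm⟩
  rw [h₁, h₂, mul_comm (add _ _), hdistrib, mul_comm _ (x i), mul_comm _ (u i), h₃, h₄]
  ac_rfl
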